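/- arXiv:2208.09359 — 3 statements merged into one kernel-verified Lean document; each statement's English description precedes it below -/
import Mathlib

section
/- Define Σ = {β ∈ ℤ^{n+1} : 0 < β < δ componentwise and βᵗC̃β = 2}. Then ψ restricts to a bijection from Σ onto Φ, whose inverse is given by ψ^{-1}(α) = (0,α) if α ∈ Φ^+ and ψ^{-1}(α) = (1, d+α) if α ∈ Φ^-. Furthermore, the adjoint ψ*: ℝ^n → ℝ^{n+1}, characterized by ψ(θ)·τ = θ·ψ*(τ) for all θ ∈ ℝ^{n+1} and τ ∈ ℝ^n, is given by ψ*(τ) = (−d·τ, τ), and it corestricts to a linear isomorphism from ℝ^n onto δ^⊥ = {u ∈ ℝ^{n+1} : u·δ = 0}. -/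
open scoped BigOperators
open Matrix

namespace QV

variable {n : ℕ}

def rootSet (C : Matrix (Fin n) (Fin n) ℤ) : Set (Fin n → ℤ) :=
  {α | α ⬝ᵥ (C *ᵥ α) = 2}

def extC (C : Matrix (Fin n) (Fin n) ℤ) (d : Fin n → ℤ) :
    Matrix (Fin (n + 1)) (Fin (n + 1)) ℤ :=
  Matrix.of fun i j =>
    Fin.cases
      (Fin.cases (2 : ℤ) (fun j' => -(∑ k, d k * C k j')) j)
      (fun i' => Fin.cases (-(∑ k, C i' k * d k)) (fun j' => C i' j') j) i

def deltaV (d : Fin n → ℤ) : Fin (n + 1) → ℤ := Fin.cons 1 d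

def psiZ (d : Fin n → ℤ) (v : Fin (n + 1) → ℤ) : Fin n → ℤ :=
  fun j => v j.succ - v 0 * d j

def psiR (d : Fin n → ℤ) (v : Fin (n + 1) → ℝ) : Fin n → ℝ :=
  fun j => v j.succ - v 0 * (d j : ℝ)

/-- The adjoint `ψ* : ℝ^n → ℝ^{n+1}`, `ψ*(τ) = (−d·τ, τ)`. -/
def psiStar (d : Fin n → ℤ) (τ : Fin n → ℝ) : Fin (n + 1) → ℝ :=
  Fin.cons (-((fun j => (d j : ℝ)) ⬝ᵥ τ)) τ

/-- The set `Σ = {β ∈ Φ̃ : 0 < β < δ}` of real roots between `0` and `δ`. -/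
def SigmaSet (C : Matrix (Fin n) (Fin n) ℤ) (d : Fin n → ℤ) : Set (Fin (n + 1) → ℤ) :=
  {β | 0 < β ∧ β < deltaV d ∧ β ⬝ᵥ (extC C d *ᵥ β) = 2}

lemma psiZ_eq (d : Fin n → ℤ) (β : Fin (n+1) → ℤ) :
    psiZ d β = Fin.tail β - β 0 • d := by
  funext j; simp [psiZ, Fin.tail]

lemma quad_key (C : Matrix (Fin n) (Fin n) ℤ) (d : Fin n → ℤ) (β : Fin (n+1) → ℤ) :
    β ⬝ᵥ (extC C d *ᵥ β) =
      psiZ d β ⬝ᵥ (C *ᵥ psiZ d β) + β 0 * β 0 * (2 - d ⬝ᵥ (C *ᵥ d)) := by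
  have hβ : β = Fin.cons (β 0) (Fin.tail β) := (Fin.cons_self_tail β).symm
  set b0 := β 0 with hb0
  set t := Fin.tail β with ht
  have hL : β ⬝ᵥ (extC C d *ᵥ β)
      = b0 * (2 * b0 - d ⬝ᵥ (C *ᵥ t)) + (t ⬝ᵥ (C *ᵥ t) - b0 * (t ⬝ᵥ (C *ᵥ d))) := by
    rw [hβ]
    simp [extC, mulVec, dotProduct, Fin.sum_univ_succ, Finset.mul_sum, Finset.sum_mul,
      mul_sub, sub_mul, mul_add, add_mul, mul_neg, neg_mul, Finset.sum_add_distrib,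
      Finset.sum_sub_distrib, Matrix.dotProduct_mulVec, vecMul]
    ring_nf
    have hc : (∑ x : Fin n, ∑ y : Fin n, b0 * d y * C y x * t x)
        = ∑ x : Fin n, ∑ y : Fin n, b0 * d x * C x y * t y :=
      Finset.sum_comm
    linarith [hc]
  rw [hL, psiZ_eq]
  simp only [sub_dotProduct, dotProduct_sub, mulVec_sub, mulVec_smul, smul_dotProduct,
    dotProduct_smul, smul_eq_mul]
  ring

lemma root_ne_zero {C : Matrix (Fin n) (Fin n) ℤ} {α : Fin n → ℤ}
    (h : α ∈ rootSet C) : α ≠ 0 := by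
  rintro rfl
  simp [rootSet] at h

lemma neg_mem_rootSet {C : Matrix (Fin n) (Fin n) ℤ} {α : Fin n → ℤ}
    (h : α ∈ rootSet C) : -α ∈ rootSet C := by
  simpa [rootSet, mulVec_neg] using h

lemma psiZ_cons_zero (d : Fin n → ℤ) (α : Fin n → ℤ) :
    psiZ d (Fin.cons 0 α) = α := by
  funext j; simp [psiZ]

lemma psiZ_cons_one (d : Fin n → ℤ) (α : Fin n → ℤ) :
    psiZ d (Fin.cons 1 (d + α)) = α := by
  funext j; simp [psiZ]

lemma mem_pos (C : Matrix (Fin n) (Fin n) ℤ) (d : Fin n → ℤ)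
    (hd : d ∈ rootSet C)
    (hdmax : ∀ α ∈ rootSet C, 0 ≤ α → α ≤ d)
    {α : Fin n → ℤ} (hα : α ∈ rootSet C) (h0 : 0 ≤ α) :
    Fin.cons 0 α ∈ SigmaSet C d := by
  have hne : α ≠ 0 := root_ne_zero hα
  refine ⟨?_, ?_, ?_⟩
  · refine lt_of_le_of_ne ?_ ?_
    · intro i
      refine Fin.cases ?_ ?_ i
      · simp
      · intro j; simpa using h0 j
    · intro h
      apply hne
      funext j
      have := congrFun h j.succ
      simpa using this.symm
  · refine lt_of_le_of_ne ?_ ?_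
    · intro i
      refine Fin.cases ?_ ?_ i
      · simp [deltaV]
      · intro j; simpa [deltaV] using hdmax α hα h0 j
    · intro h
      have := congrFun h 0
      simp [deltaV] at this
  · rw [quad_key, psiZ_cons_zero]
    simp [rootSet] at hα
    simp [hα]

lemma mem_neg (C : Matrix (Fin n) (Fin n) ℤ) (d : Fin n → ℤ)
    (hd : d ∈ rootSet C)
    (hdmax : ∀ α ∈ rootSet C, 0 ≤ α → α ≤ d)
    {α : Fin n → ℤ} (hα : α ∈ rootSet C) (h0 : α ≤ 0) :
    Fin.cons 1 (d + α) ∈ SigmaSet C d := by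
  have hne : α ≠ 0 := root_ne_zero hα
  have hnegmax : -α ≤ d := hdmax _ (neg_mem_rootSet hα) (by
    intro j; simpa using h0 j)
  have hda : 0 ≤ d + α := by
    intro j
    have := hnegmax j
    simp at this ⊢
    linarith
  refine ⟨?_, ?_, ?_⟩
  · refine lt_of_le_of_ne ?_ ?_
    · intro i
      refine Fin.cases ?_ ?_ i
      · simp
      · intro j; simpa using hda j
    · intro h
      have := congrFun h 0
      simp at this
  · refine lt_of_le_of_ne ?_ ?_
    · intro i
      refine Fin.cases ?_ ?_ i
      · simp [deltaV]
      · intro j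
        have := h0 j
        simp [deltaV] at this ⊢
        linarith
    · intro h
      apply hne
      funext j
      have := congrFun h j.succ
      simp [deltaV] at this
      simpa using this
  · rw [quad_key, psiZ_cons_one]
    have hd2 : d ⬝ᵥ (C *ᵥ d) = 2 := hd
    simp [rootSet] at hα
    simp [hα, hd2]

lemma sigma_structure (C : Matrix (Fin n) (Fin n) ℤ) (d : Fin n → ℤ)
    {β : Fin (n+1) → ℤ} (hβ : β ∈ SigmaSet C d) :
    (β 0 = 0 ∧ 0 ≤ psiZ d β ∧ psiZ d β ≠ 0 ∧ β = Fin.cons 0 (psiZ d β)) ∨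
    (β 0 = 1 ∧ psiZ d β ≤ 0 ∧ psiZ d β ≠ 0 ∧ β = Fin.cons 1 (d + psiZ d β)) := by
  obtain ⟨h1, h2, _⟩ := hβ
  have hb0 : β 0 = 0 ∨ β 0 = 1 := by
    have l1 : (0 : ℤ) ≤ β 0 := h1.le 0
    have l2 : β 0 ≤ 1 := by simpa [deltaV] using h2.le 0
    omega
  rcases hb0 with h0 | h0
  · left
    refine ⟨h0, ?_, ?_, ?_⟩
    · intro j
      have := h1.le j.succ
      simp [psiZ, h0] at this ⊢
      exact this
    · intro hz
      apply h1.ne'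
      funext i
      refine Fin.cases ?_ ?_ i
      · exact h0
      · intro j
        have := congrFun hz j
        simp [psiZ, h0] at this
        simpa using this
    · funext i
      refine Fin.cases ?_ ?_ i
      · simp [h0]
      · intro j; simp [psiZ, h0]
  · right
    refine ⟨h0, ?_, ?_, ?_⟩
    · intro j
      have := h2.le j.succ
      simp [deltaV, psiZ, h0] at this ⊢
      linarith
    · intro hz
      apply h2.ne
      funext i
      refine Fin.cases ?_ ?_ i
      · simp [deltaV, h0]
      · intro j
        have := congrFun hz j
        simp [psiZ, h0] at this
        simp [deltaV]
        linarith
    · funext i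
      refine Fin.cases ?_ ?_ i
      · simp [h0]
      · intro j; simp [psiZ, h0]

theorem lemma_root_bijection
    (C : Matrix (Fin n) (Fin n) ℤ) (d : Fin n → ℤ)
    (hsymm : C.IsSymm)
    (hdiag : ∀ i, C i i = 2)
    (hoff : ∀ i j, i ≠ j → C i j = 0 ∨ C i j = -1)
    (hpos : ∀ u : Fin n → ℝ, u ≠ 0 → 0 < u ⬝ᵥ ((C.map (Int.cast : ℤ → ℝ)) *ᵥ u))
    (hpm : ∀ α ∈ rootSet C, 0 ≤ α ∨ α ≤ 0)
    (hd : d ∈ rootSet C) (hdpos : 0 ≤ d)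
    (hdmax : ∀ α ∈ rootSet C, 0 ≤ α → α ≤ d) :
    Set.BijOn (psiZ d) (SigmaSet C d) (rootSet C) ∧
    (∀ α ∈ rootSet C, 0 ≤ α →
        Fin.cons 0 α ∈ SigmaSet C d ∧ psiZ d (Fin.cons 0 α) = α) ∧
    (∀ α ∈ rootSet C, α ≤ 0 →
        Fin.cons 1 (d + α) ∈ SigmaSet C d ∧ psiZ d (Fin.cons 1 (d + α)) = α) ∧
    (∀ (θ : Fin (n + 1) → ℝ) (τ : Fin n → ℝ),
        psiR d θ ⬝ᵥ τ = θ ⬝ᵥ psiStar d τ) ∧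
    Function.Injective (psiStar d) ∧
    Set.range (psiStar d) = {u : Fin (n + 1) → ℝ |
      u ⬝ᵥ (fun i => ((deltaV d i : ℤ) : ℝ)) = 0} := by
  have hdquad : d ⬝ᵥ (C *ᵥ d) = 2 := hd
  refine ⟨⟨?_, ?_, ?_⟩, ?_, ?_, ?_, ?_, ?_⟩
  · -- MapsTo
    intro β hβ
    obtain ⟨_, _, hq⟩ := hβ
    have := quad_key C d β
    simp only [rootSet, Set.mem_setOf_eq]
    rw [hq] at this
    rw [hdquad] at this
    linarith [this]
  · -- InjOn
    intro β hβ β' hβ' heq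
    rcases sigma_structure C d hβ with ⟨h0, hge, hne, hrep⟩ | ⟨h0, hle, hne, hrep⟩ <;>
      rcases sigma_structure C d hβ' with ⟨h0', hge', hne', hrep'⟩ | ⟨h0', hle', hne', hrep'⟩
    · rw [hrep, hrep', heq]
    · exact absurd (le_antisymm (heq ▸ hle') hge) hne
    · exact absurd (le_antisymm hle (heq ▸ hge')) hne
    · rw [hrep, hrep', heq]
  · -- SurjOn
    intro α hα
    rcases hpm α hα with h0 | h0
    · exact ⟨Fin.cons 0 α, mem_pos C d hd hdmax hα h0, psiZ_cons_zero d α⟩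
    · exact ⟨Fin.cons 1 (d + α), mem_neg C d hd hdmax hα h0, psiZ_cons_one d α⟩
  · intro α hα h0
    exact ⟨mem_pos C d hd hdmax hα h0, psiZ_cons_zero d α⟩
  · intro α hα h0
    exact ⟨mem_neg C d hd hdmax hα h0, psiZ_cons_one d α⟩
  · -- adjoint
    intro θ τ
    simp [psiR, psiStar, dotProduct, Fin.sum_univ_succ, sub_mul,
      Finset.sum_sub_distrib, Finset.mul_sum]
    ring_nf
  · -- injective psiStar
    intro τ τ' h
    funext j
    have := congrFun h j.succ
    simpa [psiStar] using this
  · -- range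
    ext u
    simp only [Set.mem_range, Set.mem_setOf_eq]
    constructor
    · rintro ⟨τ, rfl⟩
      simp [psiStar, deltaV, dotProduct, Fin.sum_univ_succ, mul_comm]
    · intro h
      refine ⟨Fin.tail u, ?_⟩
      funext i
      refine Fin.cases ?_ ?_ i
      · simp only [psiStar, Fin.cons_zero]
        simp [dotProduct, deltaV, Fin.sum_univ_succ, mul_comm] at h
        simp [dotProduct, Fin.tail, mul_comm]
        linarith
      · intro j; simp [psiStar, Fin.tail]

end QV
end

section
/- Let x ∈ Rep(Q̄,v) and y ∈ Rep(Q̄,w) satisfy μ_ℂ(x)_i = λ_i·Id and μ_ℂ(y)_i = λ_i·Id for all i ∈ I, for some λ ∈ ℂ^I. Then ν_{x,y} ∘ σ_{x,y} = 0, i.e., the sequence 0 → Hom(v,w) → Rep(Q;v,w) → Hom(v,w) → 0 with maps σ_{x,y} and ν_{x,y} is a chain complex. -/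
open scoped BigOperators
set_option linter.unusedSectionVars false
open Matrix

namespace QV

variable {E I : Type}

abbrev dSrc (s t : E → I) : E ⊕ E → I := Sum.elim s t
abbrev dTgt (s t : E → I) : E ⊕ E → I := Sum.elim t s

section Reps

variable [Fintype E] [DecidableEq I]

abbrev Rep (s t : E → I) (v : I → ℕ) : Type :=
  ∀ h : E ⊕ E, Matrix (Fin (v (dTgt s t h))) (Fin (v (dSrc s t h))) ℂ

def castSq {a b : ℕ} (h : a = b) (M : Matrix (Fin a) (Fin a) ℂ) :
    Matrix (Fin b) (Fin b) ℂ := h ▸ M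

def pos {s t : E → I} {v : I → ℕ} (x : Rep s t v) (e : E) :
    Matrix (Fin (v (t e))) (Fin (v (s e))) ℂ := x (Sum.inl e)

def neg {s t : E → I} {v : I → ℕ} (x : Rep s t v) (e : E) :
    Matrix (Fin (v (s e))) (Fin (v (t e))) ℂ := x (Sum.inr e)

noncomputable def muC (s t : E → I) {v : I → ℕ} (x : Rep s t v) (i : I) :
    Matrix (Fin (v i)) (Fin (v i)) ℂ :=
  (∑ e : E, if hh : t e = i then castSq (congrArg v hh) (pos x e * neg x e) else 0)
  - ∑ e : E, if hh : s e = i then castSq (congrArg v hh) (neg x e * pos x e) else 0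

def IsPreprojRep (s t : E → I) {v : I → ℕ} (lam : I → ℂ) (x : Rep s t v) : Prop :=
  ∀ i, muC s t x i = lam i • (1 : Matrix (Fin (v i)) (Fin (v i)) ℂ)

/-- `Hom(v,w) = ⊕_i Hom(ℂ^{v_i}, ℂ^{w_i})`. -/
abbrev HomSp (v w : I → ℕ) : Type := ∀ i, Matrix (Fin (w i)) (Fin (v i)) ℂ

/-- `Rep(Q;v,w) = ⊕_{h ∈ Q̄} Hom(ℂ^{v_{s(h)}}, ℂ^{w_{t(h)}})`. -/
abbrev RepHom (s t : E → I) (v w : I → ℕ) : Type :=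
  ∀ h : E ⊕ E, Matrix (Fin (w (dTgt s t h))) (Fin (v (dSrc s t h))) ℂ

def posH {s t : E → I} {v w : I → ℕ} (f : RepHom s t v w) (e : E) :
    Matrix (Fin (w (t e))) (Fin (v (s e))) ℂ := f (Sum.inl e)

def negH {s t : E → I} {v w : I → ℕ} (f : RepHom s t v w) (e : E) :
    Matrix (Fin (w (s e))) (Fin (v (t e))) ℂ := f (Sum.inr e)

def castM {a b a' b' : ℕ} (h1 : a = a') (h2 : b = b')
    (M : Matrix (Fin a) (Fin b) ℂ) : Matrix (Fin a') (Fin b') ℂ :=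
  Matrix.of fun i j => M (Fin.cast h1.symm i) (Fin.cast h2.symm j)

theorem castM_add {a b a' b' : ℕ} (h1 : a = a') (h2 : b = b')
    (M N : Matrix (Fin a) (Fin b) ℂ) :
    castM h1 h2 (M + N) = castM h1 h2 M + castM h1 h2 N := by
  subst h1; subst h2; rfl

theorem castM_smul {a b a' b' : ℕ} (h1 : a = a') (h2 : b = b') (c : ℂ)
    (M : Matrix (Fin a) (Fin b) ℂ) :
    castM h1 h2 (c • M) = c • castM h1 h2 M := by
  subst h1; subst h2; rfl

theorem posH_add {s t : E → I} {v w : I → ℕ} (f g : RepHom s t v w) (e : E) :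
    posH (f + g) e = posH f e + posH g e := rfl

theorem negH_add {s t : E → I} {v w : I → ℕ} (f g : RepHom s t v w) (e : E) :
    negH (f + g) e = negH f e + negH g e := rfl

theorem posH_smul {s t : E → I} {v w : I → ℕ} (c : ℂ) (f : RepHom s t v w) (e : E) :
    posH (c • f) e = c • posH f e := rfl

theorem negH_smul {s t : E → I} {v w : I → ℕ} (c : ℂ) (f : RepHom s t v w) (e : E) :
    negH (c • f) e = c • negH f e := rfl

/-- The map `σ_{x,y}(u) = (u_{t(h)} x_h − y_h u_{s(h)})_{h ∈ Q̄}`. -/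
noncomputable def sigmaMap (s t : E → I) {v w : I → ℕ} (x : Rep s t v) (y : Rep s t w) :
    HomSp v w →ₗ[ℂ] RepHom s t v w where
  toFun u := fun h => u (dTgt s t h) * x h - y h * u (dSrc s t h)
  map_add' u u' := by
    funext h
    simp only [Pi.add_apply, Matrix.add_mul, Matrix.mul_add]
    abel
  map_smul' c u := by
    funext h
    simp only [Pi.smul_apply, Matrix.smul_mul, Matrix.mul_smul, RingHom.id_apply,
      smul_sub]

/-- The map `ν_{x,y}(f)_i = Σ_{h ∈ Q̄, t(h) = i} ε(h)(f_h x_{h̄} + y_h f_{h̄})`. -/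
noncomputable def nuMap (s t : E → I) {v w : I → ℕ} (x : Rep s t v) (y : Rep s t w) :
    RepHom s t v w →ₗ[ℂ] HomSp v w where
  toFun f := fun i =>
    (∑ e : E, if hh : t e = i then
        castM (congrArg w hh) (congrArg v hh)
          (posH f e * neg x e + pos y e * negH f e) else 0)
    - ∑ e : E, if hh : s e = i then
        castM (congrArg w hh) (congrArg v hh)
          (negH f e * pos x e + neg y e * posH f e) else 0
  map_add' f g := by
    funext i
    have e1 : ∀ e : E, (if hh : t e = i then
        castM (congrArg w hh) (congrArg v hh)
          (posH (f + g) e * neg x e + pos y e * negH (f + g) e) else 0)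
        = (if hh : t e = i then
            castM (congrArg w hh) (congrArg v hh)
              (posH f e * neg x e + pos y e * negH f e) else 0)
          + (if hh : t e = i then
            castM (congrArg w hh) (congrArg v hh)
              (posH g e * neg x e + pos y e * negH g e) else 0) := by
      intro e
      by_cases hh : t e = i
      · simp only [dif_pos hh, posH_add, negH_add, Matrix.add_mul, Matrix.mul_add,
          add_add_add_comm, castM_add]
      · simp [dif_neg hh]
    have e2 : ∀ e : E, (if hh : s e = i then
        castM (congrArg w hh) (congrArg v hh)
          (negH (f + g) e * pos x e + neg y e * posH (f + g) e) else 0)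
        = (if hh : s e = i then
            castM (congrArg w hh) (congrArg v hh)
              (negH f e * pos x e + neg y e * posH f e) else 0)
          + (if hh : s e = i then
            castM (congrArg w hh) (congrArg v hh)
              (negH g e * pos x e + neg y e * posH g e) else 0) := by
      intro e
      by_cases hh : s e = i
      · simp only [dif_pos hh, posH_add, negH_add, Matrix.add_mul, Matrix.mul_add,
          add_add_add_comm, castM_add]
      · simp [dif_neg hh]
    simp only [Pi.add_apply]
    rw [Finset.sum_congr rfl (fun e _ => e1 e), Finset.sum_congr rfl (fun e _ => e2 e),
      Finset.sum_add_distrib, Finset.sum_add_distrib]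
    abel
  map_smul' c f := by
    funext i
    have e1 : ∀ e : E, (if hh : t e = i then
        castM (congrArg w hh) (congrArg v hh)
          (posH (c • f) e * neg x e + pos y e * negH (c • f) e) else 0)
        = c • (if hh : t e = i then
            castM (congrArg w hh) (congrArg v hh)
              (posH f e * neg x e + pos y e * negH f e) else 0) := by
      intro e
      by_cases hh : t e = i
      · simp only [dif_pos hh, posH_smul, negH_smul, Matrix.smul_mul, Matrix.mul_smul,
          ← smul_add, castM_smul]
      · simp [dif_neg hh]
    have e2 : ∀ e : E, (if hh : s e = i then
        castM (congrArg w hh) (congrArg v hh)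
          (negH (c • f) e * pos x e + neg y e * posH (c • f) e) else 0)
        = c • (if hh : s e = i then
            castM (congrArg w hh) (congrArg v hh)
              (negH f e * pos x e + neg y e * posH f e) else 0) := by
      intro e
      by_cases hh : s e = i
      · simp only [dif_pos hh, posH_smul, negH_smul, Matrix.smul_mul, Matrix.mul_smul,
          ← smul_add, castM_smul]
      · simp [dif_neg hh]
    simp only [RingHom.id_apply, Pi.smul_apply]
    rw [Finset.sum_congr rfl (fun e _ => e1 e), Finset.sum_congr rfl (fun e _ => e2 e),
      ← Finset.smul_sum, ← Finset.smul_sum, smul_sub]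

end Reps

/- With `u` fixed, the two summands of `ν (σ u)` coming from an edge `e` telescope: the terms
through the far endpoint of `e` cancel, leaving `u_i (x_e x̄_e) - (y_e ȳ_e) u_i`. Summing over the
edges gives `ν (σ u)_i = u_i μ(x)_i - μ(y)_i u_i`, which vanishes when `μ(x)_i` and `μ(y)_i` are the
same scalar `λ_i`. -/

section NuSigma

variable [Fintype E] [DecidableEq I] {s t : E → I} {v w : I → ℕ}

theorem posH_sigmaMap (x : Rep s t v) (y : Rep s t w) (u : HomSp v w) (e : E) :
    posH (sigmaMap s t x y u) e = u (t e) * pos x e - pos y e * u (s e) := rfl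

theorem negH_sigmaMap (x : Rep s t v) (y : Rep s t w) (u : HomSp v w) (e : E) :
    negH (sigmaMap s t x y u) e = u (s e) * neg x e - neg y e * u (t e) := rfl

theorem dite_castM_telescope (u : HomSp v w) {i j k : I}
    (X₁ : Matrix (Fin (v j)) (Fin (v k)) ℂ) (X₂ : Matrix (Fin (v k)) (Fin (v j)) ℂ)
    (Y₁ : Matrix (Fin (w j)) (Fin (w k)) ℂ) (Y₂ : Matrix (Fin (w k)) (Fin (w j)) ℂ) :
    (if hh : j = i then castM (congrArg w hh) (congrArg v hh)
        ((u j * X₁ - Y₁ * u k) * X₂ + Y₁ * (u k * X₂ - Y₂ * u j)) else 0)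
      = u i * (if hh : j = i then castSq (congrArg v hh) (X₁ * X₂) else 0)
        - (if hh : j = i then castSq (congrArg w hh) (Y₁ * Y₂) else 0) * u i := by
  by_cases hh : j = i
  · subst hh
    rw [dif_pos rfl, dif_pos rfl, dif_pos rfl]
    show (u j * X₁ - Y₁ * u k) * X₂ + Y₁ * (u k * X₂ - Y₂ * u j)
      = u j * (X₁ * X₂) - Y₁ * Y₂ * u j
    simp only [Matrix.sub_mul, Matrix.mul_sub, Matrix.mul_assoc]
    abel
  · simp [dif_neg hh]

theorem nuMap_sigmaMap_apply (x : Rep s t v) (y : Rep s t w) (u : HomSp v w) (i : I) :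
    nuMap s t x y (sigmaMap s t x y u) i = u i * muC s t x i - muC s t y i * u i := by
  simp only [nuMap, LinearMap.coe_mk, AddHom.coe_mk, posH_sigmaMap, negH_sigmaMap,
    dite_castM_telescope]
  simp only [muC, Finset.sum_sub_distrib, ← Matrix.mul_sum, ← Matrix.sum_mul, Matrix.mul_sub,
    Matrix.sub_mul]
  abel

end NuSigma

theorem lemma_nu_comp_sigma_eq_zero_general
    [Fintype E] [DecidableEq I] (s t : E → I)
    {v w : I → ℕ} (lam : I → ℂ)
    (x : Rep s t v) (y : Rep s t w)
    (hx : IsPreprojRep s t lam x) (hy : IsPreprojRep s t lam y) :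
    ∀ u : HomSp v w, nuMap s t x y (sigmaMap s t x y u) = 0 := by
  intro u
  funext i
  rw [nuMap_sigmaMap_apply, hx i, hy i, Matrix.mul_smul, Matrix.smul_mul, Matrix.mul_one,
    Matrix.one_mul, sub_self, Pi.zero_apply]

theorem lemma_nu_comp_sigma_eq_zero
    [Fintype E] [Fintype I] [DecidableEq I] (s t : E → I)
    {v w : I → ℕ} (lam : I → ℂ)
    (x : Rep s t v) (y : Rep s t w)
    (hx : IsPreprojRep s t lam x) (hy : IsPreprojRep s t lam y) :
    ∀ u : HomSp v w, nuMap s t x y (sigmaMap s t x y u) = 0 :=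
  lemma_nu_comp_sigma_eq_zero_general s t lam x y hx hy

end QV
end

section
/- Let x ∈ Rep(Q̄,v) and y ∈ Rep(Q̄,w) satisfy μ_ℂ(x)_i = λ_i·Id and μ_ℂ(y)_i = λ_i·Id for all i ∈ I, for some λ ∈ ℂ^I. Then the cokernel of ν_{x,y} is isomorphic to the dual of the kernel of σ_{y,x}; in particular dim_ℂ coker(ν_{x,y}) = dim_ℂ ker(σ_{y,x}), where ker(σ_{y,x}) is the space of homomorphisms of representations from y to x. -/
open scoped BigOperators
set_option linter.unusedSectionVars false
open Matrix

namespace QV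

variable {E I : Type}

section Adj

variable [Fintype E] [Fintype I] [DecidableEq I]

theorem trace_stdBasisMatrix_mul {m n : Type} [Fintype m] [Fintype n]
    [DecidableEq m] [DecidableEq n] (k : m) (l : n) (N : Matrix n m ℂ) :
    Matrix.trace (Matrix.single k l (1 : ℂ) * N) = N l k := by
  rw [Matrix.trace, Finset.sum_eq_single k]
  · rw [Matrix.diag_apply, Matrix.mul_apply, Finset.sum_eq_single l]
    · simp [Matrix.single]
    · intro b _ hb; simp [Matrix.single, (Ne.symm hb : l ≠ b)]
    · intro hb; exact absurd (Finset.mem_univ l) hb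
  · intro a _ ha
    rw [Matrix.diag_apply, Matrix.mul_apply]
    refine Finset.sum_eq_zero fun b _ => ?_
    simp [Matrix.single, (Ne.symm ha : k ≠ a)]
  · intro hk; exact absurd (Finset.mem_univ k) hk

noncomputable def pairB (v w : I → ℕ) :
    HomSp w v →ₗ[ℂ] Module.Dual ℂ (HomSp v w) where
  toFun φ :=
    { toFun := fun u => ∑ i, Matrix.trace (u i * φ i)
      map_add' := fun u u' => by
        simp [Matrix.add_mul, Finset.sum_add_distrib]
      map_smul' := fun c u => by
        simp [Matrix.smul_mul, Finset.mul_sum] }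
  map_add' φ φ' := by
    ext u; simp [Matrix.mul_add, Finset.sum_add_distrib]
  map_smul' c φ := by
    ext u; simp [Matrix.mul_smul, Finset.mul_sum]

@[simp] theorem pairB_apply (v w : I → ℕ) (φ : HomSp w v) (u : HomSp v w) :
    pairB v w φ u = ∑ i, Matrix.trace (u i * φ i) := rfl

theorem pairB_injective (v w : I → ℕ) : Function.Injective (pairB (I := I) v w) := by
  rw [← LinearMap.ker_eq_bot, LinearMap.ker_eq_bot']
  intro φ h
  funext i
  ext l k
  have h0 := DFunLike.congr_fun h (Pi.single i (Matrix.single k l (1 : ℂ)))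
  rw [pairB_apply, LinearMap.zero_apply, Finset.sum_eq_single i] at h0
  · rw [Pi.single_eq_same, trace_stdBasisMatrix_mul] at h0
    simpa using h0
  · intro j _ hj
    rw [Pi.single_eq_of_ne hj, Matrix.zero_mul, Matrix.trace_zero]
  · intro hi; exact absurd (Finset.mem_univ i) hi

noncomputable def pairA (s t : E → I) (v w : I → ℕ) :
    RepHom s t w v →ₗ[ℂ] Module.Dual ℂ (RepHom s t v w) where
  toFun g :=
    { toFun := fun f => (∑ e, Matrix.trace (negH f e * posH g e))
        - ∑ e, Matrix.trace (posH f e * negH g e)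
      map_add' := fun f f' => by
        simp only [posH_add, negH_add, Matrix.add_mul, Matrix.trace_add,
          Finset.sum_add_distrib]
        ring
      map_smul' := fun c f => by
        simp only [posH_smul, negH_smul, Matrix.smul_mul, Matrix.trace_smul,
          smul_eq_mul, RingHom.id_apply]
        rw [mul_sub, Finset.mul_sum, Finset.mul_sum] }
  map_add' g g' := by
    ext f
    simp only [posH_add, negH_add, Matrix.mul_add, Matrix.trace_add,
      Finset.sum_add_distrib, LinearMap.coe_mk, AddHom.coe_mk, LinearMap.add_apply]
    ring
  map_smul' c g := by
    ext f
    simp only [posH_smul, negH_smul, Matrix.mul_smul, Matrix.trace_smul,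
      smul_eq_mul, RingHom.id_apply, LinearMap.coe_mk, AddHom.coe_mk,
      LinearMap.smul_apply]
    rw [mul_sub, Finset.mul_sum, Finset.mul_sum]

@[simp] theorem pairA_apply (s t : E → I) (v w : I → ℕ) (g : RepHom s t w v)
    (f : RepHom s t v w) :
    pairA s t v w g f = (∑ e, Matrix.trace (negH f e * posH g e))
        - ∑ e, Matrix.trace (posH f e * negH g e) := rfl

theorem pairA_injective (s t : E → I) (v w : I → ℕ) :
    Function.Injective (pairA s t v w) := by
  letI : DecidableEq (E ⊕ E) := Classical.decEq _
  rw [← LinearMap.ker_eq_bot, LinearMap.ker_eq_bot']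
  intro g h
  have hpos : ∀ (e0 : E), posH g e0 = 0 := by
    intro e0
    ext l k
    have h0 := DFunLike.congr_fun h
      (Pi.single (Sum.inr e0) (Matrix.single k l (1 : ℂ)) : RepHom s t v w)
    rw [pairA_apply, LinearMap.zero_apply] at h0
    have h1 : ∀ e : E, posH (Pi.single (Sum.inr e0)
        (Matrix.single k l (1 : ℂ)) : RepHom s t v w) e = 0 := fun e =>
      Pi.single_eq_of_ne (by simp) _
    rw [Finset.sum_eq_single e0] at h0
    · simp only [h1, Matrix.zero_mul, Matrix.trace_zero, Finset.sum_const_zero,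
        sub_zero] at h0
      rw [show negH (Pi.single (Sum.inr e0)
          (Matrix.single k l (1 : ℂ)) : RepHom s t v w) e0
          = Matrix.single k l (1 : ℂ) from Pi.single_eq_same _ _,
        trace_stdBasisMatrix_mul] at h0
      simpa using h0
    · intro e _ he
      rw [show negH (Pi.single (Sum.inr e0)
          (Matrix.single k l (1 : ℂ)) : RepHom s t v w) e = 0 from
          Pi.single_eq_of_ne (by simpa using he) _, Matrix.zero_mul,
        Matrix.trace_zero]
    · intro hi; exact absurd (Finset.mem_univ e0) hi
  have hneg : ∀ (e0 : E), negH g e0 = 0 := by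
    intro e0
    ext l k
    have h0 := DFunLike.congr_fun h
      (Pi.single (Sum.inl e0) (Matrix.single k l (1 : ℂ)) : RepHom s t v w)
    rw [pairA_apply, LinearMap.zero_apply] at h0
    have h1 : ∀ e : E, negH (Pi.single (Sum.inl e0)
        (Matrix.single k l (1 : ℂ)) : RepHom s t v w) e = 0 := fun e =>
      Pi.single_eq_of_ne (by simp) _
    simp only [h1, Matrix.zero_mul, Matrix.trace_zero, Finset.sum_const_zero,
      zero_sub, neg_eq_zero] at h0
    rw [Finset.sum_eq_single e0] at h0
    · rw [show posH (Pi.single (Sum.inl e0)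
          (Matrix.single k l (1 : ℂ)) : RepHom s t v w) e0
          = Matrix.single k l (1 : ℂ) from Pi.single_eq_same _ _,
        trace_stdBasisMatrix_mul] at h0
      simpa using h0
    · intro e _ he
      rw [show posH (Pi.single (Sum.inl e0)
          (Matrix.single k l (1 : ℂ)) : RepHom s t v w) e = 0 from
          Pi.single_eq_of_ne (by simpa using he) _, Matrix.zero_mul,
        Matrix.trace_zero]
    · intro hi; exact absurd (Finset.mem_univ e0) hi
  funext hh
  cases hh with
  | inl e => exact hpos e
  | inr e => exact hneg e

theorem castM_refl {a b : ℕ} (h1 : a = a) (h2 : b = b) (M : Matrix (Fin a) (Fin b) ℂ) :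
    castM h1 h2 M = M := rfl

theorem trace_sum_dite {v w : I → ℕ} (a : I) (M : Matrix (Fin (w a)) (Fin (v a)) ℂ)
    (φ : HomSp w v) :
    (∑ i, Matrix.trace
      ((if hh : a = i then castM (congrArg w hh) (congrArg v hh) M else 0) * φ i))
      = Matrix.trace (M * φ a) := by
  rw [Finset.sum_eq_single a]
  · rw [dif_pos rfl, castM_refl]
  · intro j _ hj
    rw [dif_neg fun hh => hj hh.symm, Matrix.zero_mul, Matrix.trace_zero]
  · intro hi; exact absurd (Finset.mem_univ a) hi

theorem nuMap_apply (s t : E → I) {v w : I → ℕ} (x : Rep s t v) (y : Rep s t w)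
    (f : RepHom s t v w) (i : I) :
    nuMap s t x y f i =
    (∑ e : E, if hh : t e = i then
        castM (congrArg w hh) (congrArg v hh)
          (posH f e * neg x e + pos y e * negH f e) else 0)
    - ∑ e : E, if hh : s e = i then
        castM (congrArg w hh) (congrArg v hh)
          (negH f e * pos x e + neg y e * posH f e) else 0 := rfl

theorem sigmaMap_apply (s t : E → I) {v w : I → ℕ} (x : Rep s t v) (y : Rep s t w)
    (u : HomSp v w) (h : E ⊕ E) :
    sigmaMap s t x y u h = u (dTgt s t h) * x h - y h * u (dSrc s t h) := rfl

theorem nu_adjoint (s t : E → I) {v w : I → ℕ} (x : Rep s t v) (y : Rep s t w)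
    (φ : HomSp w v) (f : RepHom s t v w) :
    pairB v w φ (nuMap s t x y f) = pairA s t v w (sigmaMap s t y x φ) f := by
  rw [pairB_apply, pairA_apply]
  have hnu : ∀ i, Matrix.trace (nuMap s t x y f i * φ i)
      = (∑ e, Matrix.trace ((if hh : t e = i then
            castM (congrArg w hh) (congrArg v hh)
              (posH f e * neg x e + pos y e * negH f e) else 0) * φ i))
        - ∑ e, Matrix.trace ((if hh : s e = i then
            castM (congrArg w hh) (congrArg v hh)
              (negH f e * pos x e + neg y e * posH f e) else 0) * φ i) := by
    intro i
    rw [nuMap_apply, Matrix.sub_mul, Matrix.trace_sub, Matrix.sum_mul,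
      Matrix.sum_mul, Matrix.trace_sum, Matrix.trace_sum]
  have key : ∀ (T : E → I → ℂ), (∑ i, ∑ e, T e i) = ∑ e, ∑ i, T e i :=
    fun T => Finset.sum_comm
  rw [Finset.sum_congr rfl fun i _ => hnu i, Finset.sum_sub_distrib,
    key (fun e i => ((if hh : t e = i then castM (congrArg w hh) (congrArg v hh)
      (posH f e * neg x e + pos y e * negH f e) else 0) * φ i).trace),
    key (fun e i => ((if hh : s e = i then castM (congrArg w hh) (congrArg v hh)
      (negH f e * pos x e + neg y e * posH f e) else 0) * φ i).trace)]
  rw [Finset.sum_congr rfl fun e (_ : e ∈ Finset.univ) => trace_sum_dite (t e) _ φ,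
    Finset.sum_congr rfl fun e (_ : e ∈ Finset.univ) => trace_sum_dite (s e) _ φ]
  rw [← Finset.sum_sub_distrib, ← Finset.sum_sub_distrib]
  refine Finset.sum_congr rfl fun e _ => ?_
  have hp : posH (sigmaMap s t y x φ) e = φ (t e) * pos y e - pos x e * φ (s e) := rfl
  have hn : negH (sigmaMap s t y x φ) e = φ (s e) * neg y e - neg x e * φ (t e) := rfl
  rw [hp, hn]
  simp only [Matrix.add_mul, Matrix.mul_sub, Matrix.trace_add, Matrix.trace_sub,
    Matrix.mul_assoc]
  rw [Matrix.trace_mul_comm (pos y e) (negH f e * φ (t e)),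
    Matrix.trace_mul_comm (neg y e) (posH f e * φ (s e)), Matrix.mul_assoc,
    Matrix.mul_assoc]
  ring

theorem finrank_HomSp (v w : I → ℕ) :
    Module.finrank ℂ (HomSp v w) = ∑ i, w i * v i := by
  rw [Module.finrank_pi_fintype]
  simp [Module.finrank_matrix]

theorem finrank_RepHom (s t : E → I) (v w : I → ℕ) :
    Module.finrank ℂ (RepHom s t v w)
      = ∑ h : E ⊕ E, w (dTgt s t h) * v (dSrc s t h) := by
  rw [Module.finrank_pi_fintype]
  simp [Module.finrank_matrix]

end Adj

theorem lemma_coker_nu_iso_dual_ker_sigma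
    [Fintype E] [Fintype I] [DecidableEq I] (s t : E → I)
    {v w : I → ℕ} (lam : I → ℂ)
    (x : Rep s t v) (y : Rep s t w)
    (hx : IsPreprojRep s t lam x) (hy : IsPreprojRep s t lam y) :
    Nonempty ((HomSp v w ⧸ LinearMap.range (nuMap s t x y)) ≃ₗ[ℂ]
      Module.Dual ℂ (LinearMap.ker (sigmaMap s t y x))) ∧
    Module.finrank ℂ (HomSp v w ⧸ LinearMap.range (nuMap s t x y)) =
      Module.finrank ℂ (LinearMap.ker (sigmaMap s t y x)) := by
  have hBfr : Module.finrank ℂ (HomSp w v)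
      = Module.finrank ℂ (Module.Dual ℂ (HomSp v w)) := by
    rw [Subspace.dual_finrank_eq, finrank_HomSp, finrank_HomSp]
    exact Finset.sum_congr rfl fun i _ => mul_comm _ _
  have hAfr : Module.finrank ℂ (RepHom s t w v)
      = Module.finrank ℂ (Module.Dual ℂ (RepHom s t v w)) := by
    rw [Subspace.dual_finrank_eq, finrank_RepHom, finrank_RepHom,
      Fintype.sum_sum_type, Fintype.sum_sum_type]
    simp only [dTgt, dSrc, Sum.elim_inl, Sum.elim_inr]
    rw [add_comm]
    congr 1
    · exact Finset.sum_congr rfl fun e _ => mul_comm _ _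
    · exact Finset.sum_congr rfl fun e _ => mul_comm _ _
  let eB := (pairB v w).linearEquivOfInjective (pairB_injective v w) hBfr
  have h_comm : ∀ φ : HomSp w v,
      (nuMap s t x y).dualMap (eB φ) = pairA s t v w (sigmaMap s t y x φ) := by
    intro φ
    ext f
    rw [LinearMap.dualMap_apply]
    rw [show eB φ = pairB v w φ from
      LinearMap.linearEquivOfInjective_apply _ _ _]
    exact nu_adjoint s t x y φ f
  have hker : Submodule.map (eB : HomSp w v →ₗ[ℂ] Module.Dual ℂ (HomSp v w))
      (LinearMap.ker (sigmaMap s t y x)) = LinearMap.ker (nuMap s t x y).dualMap := by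
    ext ψ
    simp only [Submodule.mem_map, LinearMap.mem_ker]
    constructor
    · rintro ⟨φ, hφ, rfl⟩
      rw [show (eB : HomSp w v →ₗ[ℂ] Module.Dual ℂ (HomSp v w)) φ = eB φ from rfl,
        h_comm φ, hφ, map_zero]
    · intro hψ
      obtain ⟨φ, rfl⟩ := eB.surjective ψ
      refine ⟨φ, ?_, rfl⟩
      apply pairA_injective s t v w
      rw [map_zero, ← h_comm φ]
      exact hψ
  let eK : LinearMap.ker (sigmaMap s t y x) ≃ₗ[ℂ]
      LinearMap.ker (nuMap s t x y).dualMap :=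
    (eB.submoduleMap (LinearMap.ker (sigmaMap s t y x))).trans
      (LinearEquiv.ofEq _ _ hker)
  have hann : LinearMap.ker (nuMap s t x y).dualMap
      = (LinearMap.range (nuMap s t x y)).dualAnnihilator :=
    LinearMap.ker_dualMap_eq_dualAnnihilator_range (f := nuMap s t x y)
  let e1 : Module.Dual ℂ (HomSp v w ⧸ LinearMap.range (nuMap s t x y)) ≃ₗ[ℂ]
      LinearMap.ker (sigmaMap s t y x) :=
    ((LinearMap.range (nuMap s t x y)).dualQuotEquivDualAnnihilator).trans
      ((LinearEquiv.ofEq _ _ hann.symm).trans eK.symm)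
  let final : (HomSp v w ⧸ LinearMap.range (nuMap s t x y)) ≃ₗ[ℂ]
      Module.Dual ℂ (LinearMap.ker (sigmaMap s t y x)) :=
    (Module.evalEquiv ℂ _).trans e1.dualMap.symm
  refine ⟨⟨final⟩, ?_⟩
  rw [final.finrank_eq, Subspace.dual_finrank_eq]

end QV
end
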